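/- arXiv:2407.20804 — 4 statements merged into one kernel-verified Lean document; each statement's English description precedes it below -/
import Mathlib

section
/- Let (Ω, P) be a finite probability space with full support associated with a lattice (V, w) in dimension d ≥ 2, and let X_α (1 ≤ α ≤ d) be the component random variables. Suppose (V, w) is isotropic with speed of sound c_s = 3^{-1/2}, and that each X_α takes values in [-1, 1]. Then for every α ∈ {1, ..., d}: P(X_α = 0) = 2/3 and P(X_α = 1) = P(X_α = -1) = 1/6; in particular X_α takes values only in {-1, 0, 1} almost surely. -/
/-! Along each axis the isotropy conditions give `E[X²] = c_s² = 1/3` and `E[X⁴] = 3 c_s⁴ = 1/3`,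
so `E[X²(1 - X²)] = 0`. Since `|X| ≤ 1` the integrand is nonnegative and all weights are positive,
hence `X ∈ {-1, 0, 1}` everywhere. For such a variable the three probabilities are determined by
the total mass `1`, the mean `0` and the second moment `1/3`. -/

open Real Set
noncomputable section

abbrev Spc (d : ℕ) := EuclideanSpace ℝ (Fin d)

/-- Kronecker delta. -/
def kron {d : ℕ} (α β : Fin d) : ℝ := if α = β then 1 else 0

/-- An isotropic lattice `(𝒱, w)` with speed of sound `cs`: pairwise distinct velocities
`v i` (with `v 0 = 0`) and strictly positive weights satisfying the five isotropy summation
(moment) conditions. -/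
structure IsoLattice (d n : ℕ) (v : Fin (n + 1) → Spc d) (w : Fin (n + 1) → ℝ) (cs : ℝ) :
    Prop where
  cs_pos : 0 < cs
  w_pos : ∀ i, 0 < w i
  v_zero : v 0 = 0
  v_inj : Function.Injective v
  sum_w : ∑ i, w i = 1
  sum_wv : ∀ α : Fin d, ∑ i, w i * v i α = 0
  sum_wvv : ∀ α β : Fin d, ∑ i, w i * (v i α * v i β) = cs ^ 2 * kron α β
  sum_wvvv : ∀ α β γ : Fin d, ∑ i, w i * (v i α * v i β * v i γ) = 0
  sum_wvvvv : ∀ α β γ ζ : Fin d, ∑ i, w i * (v i α * v i β * v i γ * v i ζ) =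
    cs ^ 4 * (kron α β * kron γ ζ + kron α γ * kron β ζ + kron α ζ * kron β γ)

open Classical in
/-- The probability `P(S)` of an event `S ⊆ Ω = {0,…,n}` on the finite probability space
associated with a lattice with weights `w` (`P({i}) = wᵢ`). -/
def probOf (n : ℕ) (w : Fin (n + 1) → ℝ) (S : Fin (n + 1) → Prop) : ℝ :=
  ∑ i, if S i then w i else 0

theorem mem_neg_one_zero_one_of_sq_mul_one_sub_sq_eq_zero {x : ℝ} (h : x ^ 2 * (1 - x ^ 2) = 0) :
    x ∈ ({-1, 0, 1} : Set ℝ) := by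
  have : x ^ 2 * ((x + 1) * (x - 1)) = 0 := by linear_combination -h
  rcases mul_eq_zero.mp this with h0 | h1
  · simp [pow_eq_zero_iff two_ne_zero |>.mp h0]
  · rcases mul_eq_zero.mp h1 with hm | hp
    · simp [eq_neg_of_add_eq_zero_left hm]
    · simp [sub_eq_zero.mp hp]

theorem mem_neg_one_zero_one_of_sum_mul_sq_eq_sum_mul_pow_four {ι : Type*} [Fintype ι]
    {w x : ι → ℝ} (hw : ∀ i, 0 < w i) (hx : ∀ i, |x i| ≤ 1)
    (hmoments : ∑ i, w i * x i ^ 2 = ∑ i, w i * x i ^ 4) (i : ι) :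
    x i ∈ ({-1, 0, 1} : Set ℝ) := by
  have hterm_nonneg : ∀ j ∈ Finset.univ, 0 ≤ w j * (x j ^ 2 * (1 - x j ^ 2)) := fun j _ ↦ by
    have : x j ^ 2 ≤ 1 := sq_le_one_iff_abs_le_one _ |>.mpr (hx j)
    have := (hw j).le
    positivity
  have hsum : ∑ j, w j * (x j ^ 2 * (1 - x j ^ 2)) = 0 := by
    rw [← sub_eq_zero.mpr hmoments, ← Finset.sum_sub_distrib]
    exact Finset.sum_congr rfl fun j _ ↦ by ring
  have hi := (Finset.sum_eq_zero_iff_of_nonneg hterm_nonneg).mp hsum i (Finset.mem_univ i)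
  exact mem_neg_one_zero_one_of_sq_mul_one_sub_sq_eq_zero
    ((mul_eq_zero.mp hi).resolve_left (hw i).ne')

section ThreeValued

variable {n : ℕ} (w : Fin (n + 1) → ℝ) {x : Fin (n + 1) → ℝ}
  (hx : ∀ i, x i ∈ ({-1, 0, 1} : Set ℝ))
include hx

theorem sum_eq_probOf_add_probOf_add_probOf :
    ∑ i, w i = probOf n w (x · = 0) + probOf n w (x · = 1) + probOf n w (x · = -1) := by
  unfold probOf
  rw [← Finset.sum_add_distrib, ← Finset.sum_add_distrib]
  refine Finset.sum_congr rfl fun i _ ↦ ?_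
  rcases hx i with h | h | (h : x i = 1) <;> norm_num [h]

theorem sum_mul_eq_probOf_sub_probOf :
    ∑ i, w i * x i = probOf n w (x · = 1) - probOf n w (x · = -1) := by
  unfold probOf
  rw [← Finset.sum_sub_distrib]
  refine Finset.sum_congr rfl fun i _ ↦ ?_
  rcases hx i with h | h | (h : x i = 1) <;> norm_num [h]

theorem sum_mul_sq_eq_probOf_add_probOf :
    ∑ i, w i * x i ^ 2 = probOf n w (x · = 1) + probOf n w (x · = -1) := by
  unfold probOf
  rw [← Finset.sum_add_distrib]
  refine Finset.sum_congr rfl fun i _ ↦ ?_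
  rcases hx i with h | h | (h : x i = 1) <;> norm_num [h]

theorem probOf_eq_of_moments {m : ℝ} (hmass : ∑ i, w i = 1) (hmean : ∑ i, w i * x i = 0)
    (hvar : ∑ i, w i * x i ^ 2 = m) :
    probOf n w (x · = 0) = 1 - m ∧ probOf n w (x · = 1) = m / 2 ∧
      probOf n w (x · = -1) = m / 2 := by
  rw [sum_eq_probOf_add_probOf_add_probOf w hx] at hmass
  rw [sum_mul_eq_probOf_sub_probOf w hx] at hmean
  rw [sum_mul_sq_eq_probOf_add_probOf w hx] at hvar
  refine ⟨?_, ?_, ?_⟩ <;> linarith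

end ThreeValued

namespace IsoLattice

variable {d n : ℕ} {v : Fin (n + 1) → Spc d} {w : Fin (n + 1) → ℝ} {cs : ℝ}

theorem sum_mul_sq (hlat : IsoLattice d n v w cs) (α : Fin d) :
    ∑ i, w i * v i α ^ 2 = cs ^ 2 := by
  simpa [kron, sq] using hlat.sum_wvv α α

theorem sum_mul_pow_four (hlat : IsoLattice d n v w cs) (α : Fin d) :
    ∑ i, w i * v i α ^ 4 = 3 * cs ^ 4 := by
  calc ∑ i, w i * v i α ^ 4 = ∑ i, w i * (v i α * v i α * v i α * v i α) :=
        Finset.sum_congr rfl fun i _ ↦ by ring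
    _ = 3 * cs ^ 4 := by rw [hlat.sum_wvvvv]; norm_num [kron]; ring

end IsoLattice

theorem isotropic_lattice_marginal_law_general (d n : ℕ)
    (v : Fin (n + 1) → Spc d) (w : Fin (n + 1) → ℝ)
    (hlat : IsoLattice d n v w (Real.sqrt 3)⁻¹)
    (hbdd : ∀ i, ∀ α : Fin d, |v i α| ≤ 1) :
    ∀ α : Fin d,
      probOf n w (fun i => v i α = 0) = 2 / 3 ∧
      probOf n w (fun i => v i α = 1) = 1 / 6 ∧
      probOf n w (fun i => v i α = -1) = 1 / 6 ∧
      ∀ i, v i α ∈ ({-1, 0, 1} : Set ℝ) := by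
  intro α
  have hcs2 : (Real.sqrt 3)⁻¹ ^ 2 = 1 / 3 := by
    rw [inv_pow, sq_sqrt (by norm_num : (0 : ℝ) ≤ 3), one_div]
  have hsq : ∑ i, w i * v i α ^ 2 = 1 / 3 := by rw [hlat.sum_mul_sq, hcs2]
  have hfourth : ∑ i, w i * v i α ^ 4 = 1 / 3 := by
    rw [hlat.sum_mul_pow_four, (by ring : (Real.sqrt 3)⁻¹ ^ 4 = ((Real.sqrt 3)⁻¹ ^ 2) ^ 2), hcs2]
    norm_num
  have hvals : ∀ i, v i α ∈ ({-1, 0, 1} : Set ℝ) :=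
    mem_neg_one_zero_one_of_sum_mul_sq_eq_sum_mul_pow_four hlat.w_pos (hbdd · α)
      (hsq.trans hfourth.symm)
  obtain ⟨h0, h1, hm1⟩ :=
    probOf_eq_of_moments w hvals hlat.sum_w (hlat.sum_wv α) hsq
  exact ⟨by rw [h0]; norm_num, by rw [h1]; norm_num, by rw [hm1]; norm_num, hvals⟩

theorem isotropic_lattice_marginal_law (d n : ℕ) (hd : 2 ≤ d)
    (v : Fin (n + 1) → Spc d) (w : Fin (n + 1) → ℝ)
    (hlat : IsoLattice d n v w (Real.sqrt 3)⁻¹)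
    (hbdd : ∀ i, ∀ α : Fin d, |v i α| ≤ 1) :
    ∀ α : Fin d,
      probOf n w (fun i => v i α = 0) = 2 / 3 ∧
      probOf n w (fun i => v i α = 1) = 1 / 6 ∧
      probOf n w (fun i => v i α = -1) = 1 / 6 ∧
      ∀ i, v i α ∈ ({-1, 0, 1} : Set ℝ) :=
  isotropic_lattice_marginal_law_general d n v w hlat hbdd

end
end

section
/- Let (Ω, P) be a finite probability space with full support associated with a lattice (V, w) in dimension d ≥ 2, and let X_α (1 ≤ α ≤ d) be the component random variables. Suppose (V, w) is isotropic with speed of sound c_s = 3^{-1/2}, and that each X_α takes values in [-1, 1]. Then for all α, β ∈ {1, ..., d} with α ≠ β: P(X_α = 0, X_β = 0) = 4/9; P(X_α = σ_α, X_β = 0) = 1/9 for each σ_α ∈ {-1, 1}; and P(X_α = σ_α, X_β = σ_β) = 1/36 for each σ_α, σ_β ∈ {-1, 1}. -/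
/-!
Since `E[X²] = c_s² = 1/3` and `E[X⁴] = 3 c_s⁴ = 1/3`, the nonnegative variable `X²(1 - X²)` has
mean zero, so every component takes values in `{-1, 0, 1}`. On that set the indicator of `σ` is a
quadratic polynomial in `x`, so each joint probability `P(X_α = a, X_β = b)` is a combination of the
moments `E[X_α^i X_β^j]` with `i, j ≤ 2`. Isotropy makes these factor as for independent variables,
whence `P(X_α = a, X_β = b) = m(a) m(b)` with `m(0) = 2/3` and `m(±1) = 1/6`.
-/

open Real Set
noncomputable section

open Finset

/-- The Lagrange polynomial in `x` on the nodes `{-1, 0, 1}` that equals `1` at `σ` and `0` at the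
other two nodes. -/
def nodeIndicator (σ x : ℝ) : ℝ :=
  (1 - σ ^ 2) + σ / 2 * x + (3 * σ ^ 2 / 2 - 1) * x ^ 2

lemma nodeIndicator_self {σ : ℝ} (hσ : σ ∈ ({-1, 0, 1} : Set ℝ)) : nodeIndicator σ σ = 1 := by
  rcases hσ with rfl | rfl | rfl <;> norm_num [nodeIndicator]

lemma nodeIndicator_of_ne {σ x : ℝ} (hσ : σ ∈ ({-1, 0, 1} : Set ℝ))
    (hx : x ∈ ({-1, 0, 1} : Set ℝ)) (hne : x ≠ σ) : nodeIndicator σ x = 0 := by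
  rcases hσ with rfl | rfl | rfl <;> rcases hx with rfl | rfl | rfl <;>
    norm_num [nodeIndicator] at *

lemma probOf_and_eq_sum_nodeIndicator {n : ℕ} {w : Fin (n + 1) → ℝ} {x y : Fin (n + 1) → ℝ}
    {a b : ℝ} (hx : ∀ i, x i ∈ ({-1, 0, 1} : Set ℝ)) (hy : ∀ i, y i ∈ ({-1, 0, 1} : Set ℝ))
    (ha : a ∈ ({-1, 0, 1} : Set ℝ)) (hb : b ∈ ({-1, 0, 1} : Set ℝ)) :
    probOf n w (fun i => x i = a ∧ y i = b) =
      ∑ i, w i * (nodeIndicator a (x i) * nodeIndicator b (y i)) := by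
  refine sum_congr rfl fun i _ => ?_
  by_cases hxa : x i = a <;> by_cases hyb : y i = b
  · simp [hxa, hyb, nodeIndicator_self ha, nodeIndicator_self hb]
  · simp [hxa, hyb, nodeIndicator_of_ne hb (hy i) hyb]
  · simp [hxa, hyb, nodeIndicator_of_ne ha (hx i) hxa]
  · simp [hxa, hyb, nodeIndicator_of_ne ha (hx i) hxa]

namespace IsoLattice

variable {d n : ℕ} {v : Fin (n + 1) → Spc d} {w : Fin (n + 1) → ℝ} {cs : ℝ}

lemma coord_mem_of_abs_le_one (hlat : IsoLattice d n v w cs) (hcs : cs ^ 2 = 1 / 3) {α : Fin d}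
    (hbdd : ∀ i, |v i α| ≤ 1) (i : Fin (n + 1)) : v i α ∈ ({-1, 0, 1} : Set ℝ) := by
  have hmean : ∑ j, w j * (v j α ^ 2 * (1 - v j α ^ 2)) = 0 := by
    have h2 := hlat.sum_wvv α α
    have h4 := hlat.sum_wvvvv α α α α
    simp only [kron, if_true] at h2 h4
    calc ∑ j, w j * (v j α ^ 2 * (1 - v j α ^ 2))
        = ∑ j, w j * (v j α * v j α) - ∑ j, w j * (v j α * v j α * v j α * v j α) := by
          rw [← sum_sub_distrib]
          exact sum_congr rfl fun j _ => by ring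
      _ = cs ^ 2 - 3 * (cs ^ 2) ^ 2 := by rw [h2, h4]; ring
      _ = 0 := by rw [hcs]; norm_num
  have hnonneg : ∀ j ∈ Finset.univ, 0 ≤ w j * (v j α ^ 2 * (1 - v j α ^ 2)) := fun j _ =>
    mul_nonneg (hlat.w_pos j).le
      (mul_nonneg (sq_nonneg _) (sub_nonneg.mpr ((sq_le_one_iff_abs_le_one _).mpr (hbdd j))))
  have hi := (sum_eq_zero_iff_of_nonneg hnonneg).mp hmean i (Finset.mem_univ i)
  have hroot : v i α ^ 2 * ((v i α + 1) * (v i α - 1)) = 0 := by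
    rcases mul_eq_zero.mp hi with hw | h
    · exact absurd hw (hlat.w_pos i).ne'
    · linear_combination -h
  simp only [Set.mem_insert_iff, Set.mem_singleton_iff]
  rcases mul_eq_zero.mp hroot with h | h
  · exact Or.inr (Or.inl (pow_eq_zero_iff two_ne_zero |>.mp h))
  · rcases mul_eq_zero.mp h with h | h
    · exact Or.inl (by linarith)
    · exact Or.inr (Or.inr (by linarith))

lemma sum_mul_quadratic_quadratic (hlat : IsoLattice d n v w cs) {α β : Fin d} (hne : α ≠ β)
    (a₀ a₁ a₂ b₀ b₁ b₂ : ℝ) :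
    ∑ i, w i * ((a₀ + a₁ * v i α + a₂ * v i α ^ 2) * (b₀ + b₁ * v i β + b₂ * v i β ^ 2)) =
      (a₀ + a₂ * cs ^ 2) * (b₀ + b₂ * cs ^ 2) := by
  have hexpand :
      ∑ i, w i * ((a₀ + a₁ * v i α + a₂ * v i α ^ 2) * (b₀ + b₁ * v i β + b₂ * v i β ^ 2)) =
        a₀ * b₀ * ∑ i, w i + a₁ * b₀ * ∑ i, w i * v i α + a₀ * b₁ * ∑ i, w i * v i β
        + a₂ * b₀ * ∑ i, w i * (v i α * v i α) + a₀ * b₂ * ∑ i, w i * (v i β * v i β)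
        + a₁ * b₁ * ∑ i, w i * (v i α * v i β)
        + a₂ * b₁ * ∑ i, w i * (v i α * v i α * v i β)
        + a₁ * b₂ * ∑ i, w i * (v i α * v i β * v i β)
        + a₂ * b₂ * ∑ i, w i * (v i α * v i α * v i β * v i β) := by
    simp only [mul_sum, ← sum_add_distrib]
    exact sum_congr rfl fun i _ => by ring
  rw [hexpand, hlat.sum_w, hlat.sum_wv, hlat.sum_wv, hlat.sum_wvv, hlat.sum_wvv, hlat.sum_wvv,
    hlat.sum_wvvv, hlat.sum_wvvv, hlat.sum_wvvvv]
  simp only [kron, if_true, if_neg hne]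
  ring

lemma probOf_pair (hlat : IsoLattice d n v w cs) (hcs : cs ^ 2 = 1 / 3)
    (hbdd : ∀ i, ∀ α : Fin d, |v i α| ≤ 1) {α β : Fin d} (hne : α ≠ β) {a b : ℝ}
    (ha : a ∈ ({-1, 0, 1} : Set ℝ)) (hb : b ∈ ({-1, 0, 1} : Set ℝ)) :
    probOf n w (fun i => v i α = a ∧ v i β = b) = (2 / 3 - a ^ 2 / 2) * (2 / 3 - b ^ 2 / 2) := by
  rw [probOf_and_eq_sum_nodeIndicator (hlat.coord_mem_of_abs_le_one hcs (hbdd · α))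
    (hlat.coord_mem_of_abs_le_one hcs (hbdd · β)) ha hb]
  simp only [nodeIndicator]
  rw [hlat.sum_mul_quadratic_quadratic hne, hcs]
  ring

end IsoLattice

theorem isotropic_lattice_pair_law_general (d n : ℕ)
    (v : Fin (n + 1) → Spc d) (w : Fin (n + 1) → ℝ)
    (hlat : IsoLattice d n v w (Real.sqrt 3)⁻¹)
    (hbdd : ∀ i, ∀ α : Fin d, |v i α| ≤ 1) :
    ∀ α β : Fin d, α ≠ β →
      probOf n w (fun i => v i α = 0 ∧ v i β = 0) = 4 / 9 ∧
      (∀ σa ∈ ({-1, 1} : Set ℝ),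
        probOf n w (fun i => v i α = σa ∧ v i β = 0) = 1 / 9) ∧
      (∀ σa ∈ ({-1, 1} : Set ℝ), ∀ σb ∈ ({-1, 1} : Set ℝ),
        probOf n w (fun i => v i α = σa ∧ v i β = σb) = 1 / 36) := by
  have hcs : (Real.sqrt 3)⁻¹ ^ 2 = 1 / 3 := by
    rw [inv_pow, Real.sq_sqrt (by norm_num : (0 : ℝ) ≤ 3), one_div]
  have hsign : ∀ σ ∈ ({-1, 1} : Set ℝ), σ ∈ ({-1, 0, 1} : Set ℝ) ∧ σ ^ 2 = 1 := by
    rintro σ (rfl | rfl) <;> norm_num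
  have hzero : (0 : ℝ) ∈ ({-1, 0, 1} : Set ℝ) := by norm_num
  intro α β hne
  refine ⟨?_, fun σa hσa => ?_, fun σa hσa σb hσb => ?_⟩
  · rw [hlat.probOf_pair hcs hbdd hne hzero hzero]
    norm_num
  · rw [hlat.probOf_pair hcs hbdd hne (hsign σa hσa).1 hzero, (hsign σa hσa).2]
    norm_num
  · rw [hlat.probOf_pair hcs hbdd hne (hsign σa hσa).1 (hsign σb hσb).1, (hsign σa hσa).2,
      (hsign σb hσb).2]
    norm_num

theorem isotropic_lattice_pair_law (d n : ℕ) (hd : 2 ≤ d)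
    (v : Fin (n + 1) → Spc d) (w : Fin (n + 1) → ℝ)
    (hlat : IsoLattice d n v w (Real.sqrt 3)⁻¹)
    (hbdd : ∀ i, ∀ α : Fin d, |v i α| ≤ 1) :
    ∀ α β : Fin d, α ≠ β →
      probOf n w (fun i => v i α = 0 ∧ v i β = 0) = 4 / 9 ∧
      (∀ σa ∈ ({-1, 1} : Set ℝ),
        probOf n w (fun i => v i α = σa ∧ v i β = 0) = 1 / 9) ∧
      (∀ σa ∈ ({-1, 1} : Set ℝ), ∀ σb ∈ ({-1, 1} : Set ℝ),
        probOf n w (fun i => v i α = σa ∧ v i β = σb) = 1 / 36) :=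
  isotropic_lattice_pair_law_general d n v w hlat hbdd
end
end

section
/- Let d = 2 and let (V, w) be a lattice whose component random variables X₁, X₂ both take values in [-1, 1]. Then (V, w) is isotropic with speed of sound c_s = 3^{-1/2} if and only if it is the D2Q9 scheme: the joint law of (X₁, X₂) is supported on {-1, 0, 1}² with P(X₁ = 0, X₂ = 0) = 4/9, P(X₁ = σ₁, X₂ = σ₂) = 1/9 whenever exactly one of σ₁, σ₂ is nonzero, and P(X₁ = σ₁, X₂ = σ₂) = 1/36 whenever both σ₁, σ₂ are nonzero (σ₁, σ₂ ∈ {-1, 0, 1}). -/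
/-!
Because `|X| ≤ 1` and `E[X²] = E[X⁴] = 1/3`, the nonnegative variable `X²(1 - X²)` has mean zero,
so each velocity component takes only the values `-1, 0, 1`. On these three nodes the indicator of
a node is a quadratic polynomial, so the joint law of `(X₁, X₂)` is determined by the mixed moments
`E[X₁ʲ X₂ᵏ]`, `j, k ≤ 2`. Isotropy makes these the products `μⱼ μₖ` of the moments of the
one-dimensional D1Q3 law (`2/3` at `0`, `1/6` at `±1`), hence the joint law is the product of two
D1Q3 laws, which is D2Q9. Conversely, the moment conditions for D2Q9 are a finite computation.
-/

open Real Set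
noncomputable section

open Finset

theorem mem_neg_one_zero_one_of_sum_sq_eq_sum_pow_four {ι : Type*} [Fintype ι] {w x : ι → ℝ}
    (hw : ∀ i, 0 < w i) (hx : ∀ i, |x i| ≤ 1)
    (h : ∑ i, w i * x i ^ 2 = ∑ i, w i * x i ^ 4) (i : ι) :
    x i ∈ ({-1, 0, 1} : Set ℝ) := by
  have hterm_nonneg : ∀ j ∈ Finset.univ, 0 ≤ w j * (x j ^ 2 * (1 - x j ^ 2)) := fun j _ =>
    mul_nonneg (hw j).le <| mul_nonneg (sq_nonneg _) <| sub_nonneg.2 <|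
      (sq_le_one_iff_abs_le_one _).2 (hx j)
  have hsum : ∑ j, w j * (x j ^ 2 * (1 - x j ^ 2)) = 0 := by
    rw [← sub_eq_zero.2 h, ← sum_sub_distrib]
    exact sum_congr rfl fun j _ => by ring
  have hi := (sum_eq_zero_iff_of_nonneg hterm_nonneg).1 hsum i (Finset.mem_univ i)
  rcases mul_eq_zero.1 hi with hwi | hxi
  · exact absurd hwi (hw i).ne'
  rcases mul_eq_zero.1 hxi with h0 | h1
  · simp [pow_eq_zero_iff two_ne_zero |>.1 h0]
  · have : x i ^ 2 = 1 ^ 2 := by linarith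
    rcases sq_eq_sq_iff_eq_or_eq_neg.1 this with h | h <;> simp [h]

theorem sum_mul_poly_mul_poly_of_moments {ι : Type*} [Fintype ι] {w x y : ι → ℝ}
    {μ ν : ℕ → ℝ} {N M : ℕ}
    (hm : ∀ j < N, ∀ k < M, ∑ i, w i * (x i ^ j * y i ^ k) = μ j * ν k) (c d : ℕ → ℝ) :
    ∑ i, w i * ((∑ j ∈ range N, c j * x i ^ j) * (∑ k ∈ range M, d k * y i ^ k)) =
      (∑ j ∈ range N, c j * μ j) * (∑ k ∈ range M, d k * ν k) := by
  calc ∑ i, w i * ((∑ j ∈ range N, c j * x i ^ j) * (∑ k ∈ range M, d k * y i ^ k))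
      = ∑ i, ∑ j ∈ range N, ∑ k ∈ range M, c j * d k * (w i * (x i ^ j * y i ^ k)) := by
        refine sum_congr rfl fun i _ => ?_
        rw [sum_mul_sum, mul_sum]
        refine sum_congr rfl fun j _ => ?_
        rw [mul_sum]
        exact sum_congr rfl fun k _ => by ring
    _ = ∑ j ∈ range N, ∑ k ∈ range M, c j * d k * ∑ i, w i * (x i ^ j * y i ^ k) := by
        simp only [mul_sum]
        rw [sum_comm]
        exact sum_congr rfl fun j _ => sum_comm
    _ = (∑ j ∈ range N, c j * μ j) * (∑ k ∈ range M, d k * ν k) := by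
        rw [sum_mul_sum]
        refine sum_congr rfl fun j hj => sum_congr rfl fun k hk => ?_
        rw [hm j (mem_range.1 hj) k (mem_range.1 hk)]
        ring

theorem sum_mul_eq_sum_sum_probOf_mul {n : ℕ} (v : Fin (n + 1) → Spc 2) (w : Fin (n + 1) → ℝ)
    {T : Finset ℝ} (hT : ∀ i, v i 0 ∈ T ∧ v i 1 ∈ T) (F : Spc 2 → ℝ) :
    ∑ i, w i * F (v i) =
      ∑ a ∈ T, ∑ b ∈ T, probOf n w (fun i => v i 0 = a ∧ v i 1 = b) * F !₂[a, b] := by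
  rw [← sum_fiberwise_of_maps_to (g := fun i => (v i 0, v i 1)) (t := T ×ˢ T)
    (fun i _ => mem_product.2 (hT i)), sum_product]
  refine sum_congr rfl fun a _ => sum_congr rfl fun b _ => ?_
  rw [probOf, sum_mul, sum_filter]
  refine sum_congr rfl fun i _ => ?_
  by_cases hab : v i 0 = a ∧ v i 1 = b
  · have hvi : v i = !₂[a, b] := by
      ext j
      fin_cases j <;> simp [hab.1, hab.2]
    simp [hvi]
  · simp [hab]

def d1q3Moment (j : ℕ) : ℝ := if j = 0 then 1 else if Even j then 1 / 3 else 0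

def d1q3Weight (a : ℝ) : ℝ := 2 / 3 - a ^ 2 / 2

/-- Coefficients of the Lagrange basis polynomial of the node `a` for the nodes `-1, 0, 1`. -/
def lagrangeCoeff (a : ℝ) : ℕ → ℝ
  | 0 => 1 - a ^ 2
  | 1 => a / 2
  | _ => 3 * a ^ 2 / 2 - 1

theorem sum_lagrangeCoeff_mul_pow {a t : ℝ} (ha : a ∈ ({-1, 0, 1} : Set ℝ))
    (ht : t ∈ ({-1, 0, 1} : Set ℝ)) :
    ∑ j ∈ range 3, lagrangeCoeff a j * t ^ j = if t = a then 1 else 0 := by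
  simp only [Set.mem_insert_iff, Set.mem_singleton_iff] at ha ht
  rcases ha with rfl | rfl | rfl <;> rcases ht with rfl | rfl | rfl <;>
    norm_num [sum_range_succ, lagrangeCoeff]

theorem sum_lagrangeCoeff_mul_d1q3Moment (a : ℝ) :
    ∑ j ∈ range 3, lagrangeCoeff a j * d1q3Moment j = d1q3Weight a := by
  simp only [sum_range_succ, sum_range_zero, lagrangeCoeff, d1q3Moment, d1q3Weight]
  norm_num
  ring

theorem d1q3Weight_mul_d1q3Weight {a b : ℝ} (ha : a ∈ ({-1, 0, 1} : Set ℝ))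
    (hb : b ∈ ({-1, 0, 1} : Set ℝ)) :
    d1q3Weight a * d1q3Weight b =
      if a = 0 ∧ b = 0 then 4 / 9 else if a = 0 ∨ b = 0 then 1 / 9 else 1 / 36 := by
  simp only [Set.mem_insert_iff, Set.mem_singleton_iff] at ha hb
  rcases ha with rfl | rfl | rfl <;> rcases hb with rfl | rfl | rfl <;> norm_num [d1q3Weight]

theorem probOf_eq_d1q3Weight_mul_of_moments {n : ℕ} {w x y : Fin (n + 1) → ℝ}
    (hx : ∀ i, x i ∈ ({-1, 0, 1} : Set ℝ)) (hy : ∀ i, y i ∈ ({-1, 0, 1} : Set ℝ))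
    (hm : ∀ j < 3, ∀ k < 3, ∑ i, w i * (x i ^ j * y i ^ k) = d1q3Moment j * d1q3Moment k)
    {a b : ℝ} (ha : a ∈ ({-1, 0, 1} : Set ℝ)) (hb : b ∈ ({-1, 0, 1} : Set ℝ)) :
    probOf n w (fun i => x i = a ∧ y i = b) = d1q3Weight a * d1q3Weight b := by
  calc probOf n w (fun i => x i = a ∧ y i = b)
      = ∑ i, w i * ((∑ j ∈ range 3, lagrangeCoeff a j * x i ^ j) *
          (∑ k ∈ range 3, lagrangeCoeff b k * y i ^ k)) := by
        refine sum_congr rfl fun i _ => ?_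
        rw [sum_lagrangeCoeff_mul_pow ha (hx i), sum_lagrangeCoeff_mul_pow hb (hy i)]
        by_cases hxa : x i = a <;> by_cases hyb : y i = b <;> simp [hxa, hyb]
    _ = d1q3Weight a * d1q3Weight b := by
        rw [sum_mul_poly_mul_poly_of_moments hm, sum_lagrangeCoeff_mul_d1q3Moment,
          sum_lagrangeCoeff_mul_d1q3Moment]

theorem inv_sqrt_three_sq : ((√3)⁻¹ : ℝ) ^ 2 = 1 / 3 := by
  rw [inv_pow, Real.sq_sqrt zero_le_three, one_div]

theorem inv_sqrt_three_pow_four : ((√3)⁻¹ : ℝ) ^ 4 = 1 / 9 := by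
  rw [show 4 = 2 * 2 from rfl, pow_mul, inv_sqrt_three_sq]
  norm_num

theorem IsoLattice.sum_sq_eq_sum_pow_four {d n : ℕ} {v : Fin (n + 1) → Spc d}
    {w : Fin (n + 1) → ℝ} (H : IsoLattice d n v w (√3)⁻¹) (α : Fin d) :
    ∑ i, w i * v i α ^ 2 = ∑ i, w i * v i α ^ 4 := by
  have h2 := H.sum_wvv α α
  have h4 := H.sum_wvvvv α α α α
  simp only [kron, if_true, inv_sqrt_three_sq, inv_sqrt_three_pow_four] at h2 h4
  calc ∑ i, w i * v i α ^ 2 = ∑ i, w i * (v i α * v i α) := by simp only [pow_two]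
    _ = ∑ i, w i * (v i α * v i α * v i α * v i α) := by rw [h2, h4]; norm_num
    _ = ∑ i, w i * v i α ^ 4 := sum_congr rfl fun i _ => by ring

theorem IsoLattice.sum_pow_mul_pow {n : ℕ} {v : Fin (n + 1) → Spc 2}
    {w : Fin (n + 1) → ℝ} (H : IsoLattice 2 n v w (√3)⁻¹) :
    ∀ j < 3, ∀ k < 3, ∑ i, w i * (v i 0 ^ j * v i 1 ^ k) = d1q3Moment j * d1q3Moment k := by
  have h2 : ∀ α β, ∑ i, w i * (v i α * v i β) = 1 / 3 * kron α β := by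
    simpa only [inv_sqrt_three_sq] using H.sum_wvv
  have h4 : ∀ α β γ ζ, ∑ i, w i * (v i α * v i β * v i γ * v i ζ) =
      1 / 9 * (kron α β * kron γ ζ + kron α γ * kron β ζ + kron α ζ * kron β γ) := by
    simpa only [inv_sqrt_three_pow_four] using H.sum_wvvvv
  intro j hj k hk
  interval_cases j <;> interval_cases k
  · convert H.sum_w using 1 <;> simp [d1q3Moment]
  · convert H.sum_wv 1 using 1 <;> simp [d1q3Moment]
  · convert h2 1 1 using 1 <;> simp [d1q3Moment, kron, pow_two]
  · convert H.sum_wv 0 using 1 <;> simp [d1q3Moment]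
  · convert h2 0 1 using 1 <;> simp [d1q3Moment, kron]
  · convert H.sum_wvvv 0 1 1 using 1 <;> simp [d1q3Moment, pow_two, mul_assoc]
  · convert h2 0 0 using 1 <;> simp [d1q3Moment, kron, pow_two]
  · convert H.sum_wvvv 0 0 1 using 1 <;> simp [d1q3Moment, pow_two, mul_assoc]
  · convert h4 0 0 1 1 using 1 <;> norm_num [d1q3Moment, kron, pow_two, mul_assoc]

theorem isoLattice_of_forall_sum_eq_d2q9 {n : ℕ} {v : Fin (n + 1) → Spc 2}
    {w : Fin (n + 1) → ℝ} (hw : ∀ i, 0 < w i) (hv0 : v 0 = 0) (hinj : Function.Injective v)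
    (hF : ∀ F : Spc 2 → ℝ, ∑ i, w i * F (v i) =
      ∑ a ∈ ({-1, 0, 1} : Finset ℝ), ∑ b ∈ ({-1, 0, 1} : Finset ℝ),
        d1q3Weight a * d1q3Weight b * F !₂[a, b]) :
    IsoLattice 2 n v w (√3)⁻¹ := by
  refine ⟨by positivity, hw, hv0, hinj, ?_, fun α => ?_, fun α β => ?_, fun α β γ => ?_,
    fun α β γ ζ => ?_⟩
  · simpa using (hF fun _ => 1).trans (by norm_num [d1q3Weight])
  · rw [hF fun u => u α]
    fin_cases α <;> norm_num [d1q3Weight]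
  · rw [hF fun u => u α * u β, inv_sqrt_three_sq]
    fin_cases α <;> fin_cases β <;> norm_num [d1q3Weight, kron]
  · rw [hF fun u => u α * u β * u γ]
    fin_cases α <;> fin_cases β <;> fin_cases γ <;> norm_num [d1q3Weight]
  · rw [hF fun u => u α * u β * u γ * u ζ, inv_sqrt_three_pow_four]
    fin_cases α <;> fin_cases β <;> fin_cases γ <;> fin_cases ζ <;> norm_num [d1q3Weight, kron]

theorem isotropic_2d_iff_D2Q9_general (n : ℕ)
    (v : Fin (n + 1) → Spc 2) (w : Fin (n + 1) → ℝ)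
    -- (𝒱, w) is a lattice …
    (hw : ∀ i, 0 < w i) (hv0 : v 0 = 0)
    (hinj : Function.Injective v)
    -- … whose velocity components lie in [-1,1]
    (hbdd : ∀ i, ∀ α : Fin 2, |v i α| ≤ 1) :
    IsoLattice 2 n v w (Real.sqrt 3)⁻¹ ↔
      ((∀ i, v i 0 ∈ ({-1, 0, 1} : Set ℝ) ∧ v i 1 ∈ ({-1, 0, 1} : Set ℝ)) ∧
        ∀ a ∈ ({-1, 0, 1} : Set ℝ), ∀ b ∈ ({-1, 0, 1} : Set ℝ),
          probOf n w (fun i => v i 0 = a ∧ v i 1 = b) =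
            if a = 0 ∧ b = 0 then 4 / 9
            else if a = 0 ∨ b = 0 then 1 / 9
            else 1 / 36) := by
  constructor
  · intro H
    have hsupp (α : Fin 2) (i : Fin (n + 1)) : v i α ∈ ({-1, 0, 1} : Set ℝ) :=
      mem_neg_one_zero_one_of_sum_sq_eq_sum_pow_four hw (hbdd · α)
        (H.sum_sq_eq_sum_pow_four α) i
    refine ⟨fun i => ⟨hsupp 0 i, hsupp 1 i⟩, fun a ha b hb => ?_⟩
    rw [← d1q3Weight_mul_d1q3Weight ha hb]
    exact probOf_eq_d1q3Weight_mul_of_moments (hsupp 0) (hsupp 1) H.sum_pow_mul_pow ha hb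
  · rintro ⟨hsupp, hprob⟩
    refine isoLattice_of_forall_sum_eq_d2q9 hw hv0 hinj fun F => ?_
    rw [sum_mul_eq_sum_sum_probOf_mul v w (T := {-1, 0, 1}) (by simpa using hsupp)]
    refine sum_congr rfl fun a ha => sum_congr rfl fun b hb => ?_
    have ha' : a ∈ ({-1, 0, 1} : Set ℝ) := by simpa using ha
    have hb' : b ∈ ({-1, 0, 1} : Set ℝ) := by simpa using hb
    rw [hprob a ha' b hb', d1q3Weight_mul_d1q3Weight ha' hb']

theorem isotropic_2d_iff_D2Q9 (n : ℕ)
    (v : Fin (n + 1) → Spc 2) (w : Fin (n + 1) → ℝ)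
    -- (𝒱, w) is a lattice …
    (hw : ∀ i, 0 < w i) (hsum : ∑ i, w i = 1) (hv0 : v 0 = 0)
    (hinj : Function.Injective v)
    -- … whose velocity components lie in [-1,1]
    (hbdd : ∀ i, ∀ α : Fin 2, |v i α| ≤ 1) :
    IsoLattice 2 n v w (Real.sqrt 3)⁻¹ ↔
      ((∀ i, v i 0 ∈ ({-1, 0, 1} : Set ℝ) ∧ v i 1 ∈ ({-1, 0, 1} : Set ℝ)) ∧
        ∀ a ∈ ({-1, 0, 1} : Set ℝ), ∀ b ∈ ({-1, 0, 1} : Set ℝ),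
          probOf n w (fun i => v i 0 = a ∧ v i 1 = b) =
            if a = 0 ∧ b = 0 then 4 / 9
            else if a = 0 ∨ b = 0 then 1 / 9
            else 1 / 36) :=
  isotropic_2d_iff_D2Q9_general n v w hw hv0 hinj hbdd

end
end

section
/- Let (Ω, P) be a finite probability space with full support associated with a lattice (V, w) in dimension d ≥ 3, with component random variables X_α taking values in [-1, 1], and suppose (V, w) is isotropic with speed of sound c_s = 3^{-1/2}. Then for any pairwise distinct α, β, γ ∈ {1, ..., d} there exist constants c ∈ [0, 1/72] and c_α, c_β, c_γ ∈ [-1/72, 1/72] such that: P(X_α = X_β = X_γ = 0) = 1/3 − 8c; P(X_α = σ_α, X_β = X_γ = 0) = 1/18 + 4c + 4σ_α c_α for σ_α ∈ {-1,1}; P(X_α = σ_α, X_β = σ_β, X_γ = 0) = 1/36 − 2c − 2σ_α c_α − 2σ_β c_β for σ_α, σ_β ∈ {-1,1}; and P(X_α = σ_α, X_β = σ_β, X_γ = σ_γ) = c + σ_α c_α + σ_β c_β + σ_γ c_γ for σ_α, σ_β, σ_γ ∈ {-1,1} (and analogous formulas with the roles of α, β, γ permuted). Moreover the constants satisfy |c_α|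 + |c_β| + |c_γ| ≤ c and c + |c_ζ| + |c_η| ≤ 1/72 for any distinct ζ, η ∈ {α, β, γ}. -/
open Real Set
noncomputable section

/-!
Since `E[X²] = 1/3 = E[X⁴]` and `|X| ≤ 1`, every component takes values in `{-1, 0, 1}`, so the
indicator of `X = s` is a quadratic polynomial in `X`. Every probability
`P(X_α = s, X_β = t, X_γ = u)` is therefore a combination of the moments
`E[X_α^p X_β^q X_γ^r]` with `p, q, r ≤ 2`. Isotropy fixes those of total degree at most four (they
factorize as for independent components), and the four remaining ones are
`E[X_α² X_β² X_γ²] = 8c`, `E[X_α X_β² X_γ²] = 8c_α`, `E[X_α² X_β X_γ²] = 8c_β` and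
`E[X_α² X_β² X_γ] = 8c_γ`. The constraints on the constants express that the probabilities of the
events with all three components nonzero, or exactly two of them nonzero, are nonnegative.
-/

section Signs

variable {R : Type*} [Ring R]

theorem sq_eq_one_of_mem_signs {σ : R} (hσ : σ ∈ ({-1, 1} : Set R)) : σ ^ 2 = 1 := by
  rcases hσ with rfl | rfl <;> norm_num

theorem signs_subset : ({-1, 1} : Set R) ⊆ {-1, 0, 1} :=
  Set.insert_subset_insert (Set.subset_insert _ _)

variable [LinearOrder R] [IsOrderedRing R]

theorem exists_sign_mul_eq_abs (a : R) : ∃ s ∈ ({-1, 1} : Set R), s * a = |a| := by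
  rcases abs_cases a with ⟨h, -⟩ | ⟨h, -⟩
  · exact ⟨1, by simp, by rw [h, one_mul]⟩
  · exact ⟨-1, by simp, by rw [h, neg_one_mul]⟩

theorem abs_add_abs_le_of_forall_sign {a b K : R}
    (h : ∀ s ∈ ({-1, 1} : Set R), ∀ t ∈ ({-1, 1} : Set R), s * a + t * b ≤ K) :
    |a| + |b| ≤ K := by
  obtain ⟨s, hs, hsa⟩ := exists_sign_mul_eq_abs a
  obtain ⟨t, ht, htb⟩ := exists_sign_mul_eq_abs b
  simpa only [hsa, htb] using h s hs t ht

theorem abs_add_abs_add_abs_le_of_forall_sign {a b c K : R}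
    (h : ∀ s ∈ ({-1, 1} : Set R), ∀ t ∈ ({-1, 1} : Set R), ∀ u ∈ ({-1, 1} : Set R),
      s * a + t * b + u * c ≤ K) :
    |a| + |b| + |c| ≤ K := by
  obtain ⟨s, hs, hsa⟩ := exists_sign_mul_eq_abs a
  obtain ⟨t, ht, htb⟩ := exists_sign_mul_eq_abs b
  obtain ⟨u, hu, huc⟩ := exists_sign_mul_eq_abs c
  simpa only [hsa, htb, huc] using h s hs t ht u hu

end Signs

/-- Coefficients of the quadratic polynomial interpolating the indicator of `s` on `{-1, 0, 1}`. -/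
def indicatorCoeff (s : ℝ) : Fin 3 → ℝ := ![1 - s ^ 2, s / 2, 3 * s ^ 2 / 2 - 1]

theorem ite_eq_sum_indicatorCoeff {x s : ℝ} (hx : x ∈ ({-1, 0, 1} : Set ℝ))
    (hs : s ∈ ({-1, 0, 1} : Set ℝ)) :
    (if x = s then 1 else 0) = ∑ p : Fin 3, indicatorCoeff s p * x ^ (p : ℕ) := by
  simp only [Set.mem_insert_iff, Set.mem_singleton_iff] at hx hs
  rcases hx with rfl | rfl | rfl <;> rcases hs with rfl | rfl | rfl <;>
    norm_num [indicatorCoeff, Fin.sum_univ_three, Matrix.cons_val_two]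

theorem probOf_nonneg {n : ℕ} {w : Fin (n + 1) → ℝ} (hw : ∀ i, 0 ≤ w i)
    (S : Fin (n + 1) → Prop) : 0 ≤ probOf n w S :=
  Finset.sum_nonneg fun i _ => by split_ifs <;> simp [hw i]

theorem probOf_and_left_comm {n : ℕ} (w : Fin (n + 1) → ℝ) (P Q R : Fin (n + 1) → Prop) :
    probOf n w (fun i => P i ∧ Q i ∧ R i) = probOf n w (fun i => Q i ∧ P i ∧ R i) :=
  congrArg _ (funext fun _ => propext and_left_comm)

theorem probOf_and_rotate {n : ℕ} (w : Fin (n + 1) → ℝ) (P Q R : Fin (n + 1) → Prop) :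
    probOf n w (fun i => P i ∧ Q i ∧ R i) = probOf n w (fun i => Q i ∧ R i ∧ P i) :=
  congrArg _ (funext fun _ => propext and_rotate)

def jointMoment {d n : ℕ} (v : Fin (n + 1) → Spc d) (w : Fin (n + 1) → ℝ) (α β γ : Fin d)
    (p q r : ℕ) : ℝ :=
  ∑ i, w i * (v i α ^ p * v i β ^ q * v i γ ^ r)

namespace IsoLattice

variable {d n : ℕ} {v : Fin (n + 1) → Spc d} {w : Fin (n + 1) → ℝ} {cs : ℝ}

theorem mem_of_abs_le_one (hlat : IsoLattice d n v w cs) (hcs : cs ^ 2 = 3⁻¹)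
    (hbdd : ∀ i, ∀ α : Fin d, |v i α| ≤ 1) (i : Fin (n + 1)) (α : Fin d) :
    v i α ∈ ({-1, 0, 1} : Set ℝ) := by
  have hsum : ∑ j, w j * (v j α ^ 2 * (1 - v j α ^ 2)) = 0 := by
    have h2 := hlat.sum_wvv α α
    have h4 := hlat.sum_wvvvv α α α α
    simp only [kron, if_true] at h2 h4
    calc _ = ∑ j, w j * (v j α * v j α) - ∑ j, w j * (v j α * v j α * v j α * v j α) := by
          rw [← Finset.sum_sub_distrib]
          exact Finset.sum_congr rfl fun j _ => by ring
      _ = 0 := by rw [h2, h4, show cs ^ 4 = (cs ^ 2) ^ 2 by ring, hcs]; norm_num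
  have hterm_nonneg : ∀ j, 0 ≤ w j * (v j α ^ 2 * (1 - v j α ^ 2)) := fun j =>
    mul_nonneg (hlat.w_pos j).le <| mul_nonneg (sq_nonneg _) <| sub_nonneg.mpr <|
      (sq_le_one_iff_abs_le_one _).mpr (hbdd j α)
  have hterm := (Finset.sum_eq_zero_iff_of_nonneg fun j _ => hterm_nonneg j).mp hsum i
    (Finset.mem_univ i)
  simp only [Set.mem_insert_iff, Set.mem_singleton_iff]
  rcases mul_eq_zero.mp hterm with hw | hx
  · exact absurd hw (hlat.w_pos i).ne'
  rcases mul_eq_zero.mp hx with hx | hx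
  · exact Or.inr (Or.inl (pow_eq_zero_iff two_ne_zero |>.mp hx))
  · rcases sq_eq_one_iff.mp (sub_eq_zero.mp hx).symm with h | h
    · exact Or.inr (Or.inr h)
    · exact Or.inl h

theorem jointMoment_eq_of_add_le_four (hlat : IsoLattice d n v w cs) {α β γ : Fin d}
    (hab : α ≠ β) (hag : α ≠ γ) (hbg : β ≠ γ) {p q r : ℕ} (hp : p ≤ 2) (hq : q ≤ 2) (hr : r ≤ 2)
    (hpqr : p + q + r ≤ 4) :
    jointMoment v w α β γ p q r = if Even p ∧ Even q ∧ Even r then cs ^ (p + q + r) else 0 := by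
  have h3 := hlat.sum_wvvv
  have h4 := hlat.sum_wvvvv
  simp only [mul_assoc] at h3 h4
  -- once products are reassociated, each case is one of the moment identities of `IsoLattice`
  interval_cases p <;> interval_cases q <;> interval_cases r <;>
    simp_all [jointMoment, pow_two, mul_assoc, hlat.sum_w, hlat.sum_wv, hlat.sum_wvv, kron]

theorem sum_mul_mul_quadratic (hlat : IsoLattice d n v w cs) {α β γ : Fin d}
    (hab : α ≠ β) (hag : α ≠ γ) (hbg : β ≠ γ) (a b c : Fin 3 → ℝ) :
    ∑ i, w i * ((∑ p : Fin 3, a p * v i α ^ (p : ℕ)) * (∑ q : Fin 3, b q * v i β ^ (q : ℕ)) *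
      (∑ r : Fin 3, c r * v i γ ^ (r : ℕ))) =
    (a 0 + a 2 * cs ^ 2) * (b 0 + b 2 * cs ^ 2) * (c 0 + c 2 * cs ^ 2)
      + a 2 * b 2 * c 2 * (jointMoment v w α β γ 2 2 2 - (cs ^ 2) ^ 3)
      + a 1 * b 2 * c 2 * jointMoment v w α β γ 1 2 2
      + a 2 * b 1 * c 2 * jointMoment v w α β γ 2 1 2
      + a 2 * b 2 * c 1 * jointMoment v w α β γ 2 2 1 := by
  have expand : ∑ i, w i * ((∑ p : Fin 3, a p * v i α ^ (p : ℕ)) *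
      (∑ q : Fin 3, b q * v i β ^ (q : ℕ)) * (∑ r : Fin 3, c r * v i γ ^ (r : ℕ))) =
      ∑ p : Fin 3, ∑ q : Fin 3, ∑ r : Fin 3, a p * b q * c r * jointMoment v w α β γ p q r := by
    simp only [jointMoment, Finset.mul_sum, Fin.sum_univ_three, ← Finset.sum_add_distrib]
    exact Finset.sum_congr rfl fun i _ => by ring
  rw [expand]
  simp (disch := decide) only [Fin.sum_univ_three, Fin.val_zero, Fin.val_one, Fin.val_two,
    jointMoment_eq_of_add_le_four hlat hab hag hbg]
  norm_num
  ring

theorem probOf_eq_jointMoment (hlat : IsoLattice d n v w cs) (hcs : cs ^ 2 = 3⁻¹)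
    (hbdd : ∀ i, ∀ α : Fin d, |v i α| ≤ 1) {α β γ : Fin d}
    (hab : α ≠ β) (hag : α ≠ γ) (hbg : β ≠ γ) :
    ∀ s ∈ ({-1, 0, 1} : Set ℝ), ∀ t ∈ ({-1, 0, 1} : Set ℝ), ∀ u ∈ ({-1, 0, 1} : Set ℝ),
    probOf n w (fun i => v i α = s ∧ v i β = t ∧ v i γ = u) =
      (2 / 3 - s ^ 2 / 2) * (2 / 3 - t ^ 2 / 2) * (2 / 3 - u ^ 2 / 2)
      + (3 * s ^ 2 / 2 - 1) * (3 * t ^ 2 / 2 - 1) * (3 * u ^ 2 / 2 - 1) *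
          (jointMoment v w α β γ 2 2 2 - 1 / 27)
      + s / 2 * (3 * t ^ 2 / 2 - 1) * (3 * u ^ 2 / 2 - 1) * jointMoment v w α β γ 1 2 2
      + (3 * s ^ 2 / 2 - 1) * (t / 2) * (3 * u ^ 2 / 2 - 1) * jointMoment v w α β γ 2 1 2
      + (3 * s ^ 2 / 2 - 1) * (3 * t ^ 2 / 2 - 1) * (u / 2) * jointMoment v w α β γ 2 2 1 := by
  intro s hs t ht u hu
  have hmem := hlat.mem_of_abs_le_one hcs hbdd
  calc probOf n w (fun i => v i α = s ∧ v i β = t ∧ v i γ = u)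
      = ∑ i, w i * ((∑ p : Fin 3, indicatorCoeff s p * v i α ^ (p : ℕ)) *
          (∑ q : Fin 3, indicatorCoeff t q * v i β ^ (q : ℕ)) *
          (∑ r : Fin 3, indicatorCoeff u r * v i γ ^ (r : ℕ))) := by
        refine Finset.sum_congr rfl fun i _ => ?_
        rw [← ite_eq_sum_indicatorCoeff (hmem i α) hs, ← ite_eq_sum_indicatorCoeff (hmem i β) ht,
          ← ite_eq_sum_indicatorCoeff (hmem i γ) hu]
        split_ifs <;> simp_all
    _ = _ := by
        rw [hlat.sum_mul_mul_quadratic hab hag hbg]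
        simp only [indicatorCoeff, Matrix.cons_val_zero, Matrix.cons_val_one, Matrix.cons_val_two,
          Matrix.tail_cons, Matrix.head_cons, hcs]
        ring

theorem abs_add_abs_add_abs_jointMoment_le (hlat : IsoLattice d n v w cs) (hcs : cs ^ 2 = 3⁻¹)
    (hbdd : ∀ i, ∀ α : Fin d, |v i α| ≤ 1) {α β γ : Fin d}
    (hab : α ≠ β) (hag : α ≠ γ) (hbg : β ≠ γ) :
    |jointMoment v w α β γ 1 2 2| + |jointMoment v w α β γ 2 1 2| + |jointMoment v w α β γ 2 2 1|
      ≤ jointMoment v w α β γ 2 2 2 := by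
  simpa only [abs_neg] using abs_add_abs_add_abs_le_of_forall_sign
    (a := -jointMoment v w α β γ 1 2 2) (b := -jointMoment v w α β γ 2 1 2)
    (c := -jointMoment v w α β γ 2 2 1) fun s hs t ht u hu => by
      have h := hlat.probOf_eq_jointMoment hcs hbdd hab hag hbg s (signs_subset hs) t
        (signs_subset ht) u (signs_subset hu) ▸ probOf_nonneg (fun i => (hlat.w_pos i).le) _
      rw [sq_eq_one_of_mem_signs hs, sq_eq_one_of_mem_signs ht, sq_eq_one_of_mem_signs hu] at h
      linarith

theorem jointMoment_add_abs_add_abs_le (hlat : IsoLattice d n v w cs) (hcs : cs ^ 2 = 3⁻¹)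
    (hbdd : ∀ i, ∀ α : Fin d, |v i α| ≤ 1) {α β γ : Fin d}
    (hab : α ≠ β) (hag : α ≠ γ) (hbg : β ≠ γ) :
    jointMoment v w α β γ 2 2 2 + |jointMoment v w α β γ 1 2 2| + |jointMoment v w α β γ 2 1 2|
        ≤ 1 / 9 ∧
      jointMoment v w α β γ 2 2 2 + |jointMoment v w α β γ 1 2 2| + |jointMoment v w α β γ 2 2 1|
        ≤ 1 / 9 ∧
      jointMoment v w α β γ 2 2 2 + |jointMoment v w α β γ 2 1 2| + |jointMoment v w α β γ 2 2 1|
        ≤ 1 / 9 := by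
  set M := jointMoment v w α β γ
  have law := hlat.probOf_eq_jointMoment hcs hbdd hab hag hbg
  have hP := probOf_nonneg (fun i => (hlat.w_pos i).le)
  have zero : (0 : ℝ) ∈ ({-1, 0, 1} : Set ℝ) := by simp
  refine ⟨?_, ?_, ?_⟩
  · have := abs_add_abs_le_of_forall_sign (a := M 1 2 2) (b := M 2 1 2) (K := 1 / 9 - M 2 2 2)
      fun s hs t ht => by
        have h := law s (signs_subset hs) t (signs_subset ht) 0 zero ▸ hP _
        rw [sq_eq_one_of_mem_signs hs, sq_eq_one_of_mem_signs ht] at h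
        linarith
    linarith
  · have := abs_add_abs_le_of_forall_sign (a := M 1 2 2) (b := M 2 2 1) (K := 1 / 9 - M 2 2 2)
      fun s hs u hu => by
        have h := law s (signs_subset hs) 0 zero u (signs_subset hu) ▸ hP _
        rw [sq_eq_one_of_mem_signs hs, sq_eq_one_of_mem_signs hu] at h
        linarith
    linarith
  · have := abs_add_abs_le_of_forall_sign (a := M 2 1 2) (b := M 2 2 1) (K := 1 / 9 - M 2 2 2)
      fun t ht u hu => by
        have h := law 0 zero t (signs_subset ht) u (signs_subset hu) ▸ hP _
        rw [sq_eq_one_of_mem_signs ht, sq_eq_one_of_mem_signs hu] at h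
        linarith
    linarith

end IsoLattice

theorem isotropic_lattice_triple_law_general (d n : ℕ)
    (v : Fin (n + 1) → Spc d) (w : Fin (n + 1) → ℝ)
    (hlat : IsoLattice d n v w (Real.sqrt 3)⁻¹)
    (hbdd : ∀ i, ∀ α : Fin d, |v i α| ≤ 1) :
    ∀ α β γ : Fin d, α ≠ β → α ≠ γ → β ≠ γ →
      ∃ c ∈ Icc (0 : ℝ) (1 / 72), ∃ ca ∈ Icc (-(1 / 72) : ℝ) (1 / 72),
      ∃ cb ∈ Icc (-(1 / 72) : ℝ) (1 / 72), ∃ cg ∈ Icc (-(1 / 72) : ℝ) (1 / 72),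
        -- P(X_α = X_β = X_γ = 0) = 1/3 − 8c
        probOf n w (fun i => v i α = 0 ∧ v i β = 0 ∧ v i γ = 0) = 1 / 3 - 8 * c ∧
        -- P(X_ζ = σ, other two = 0) = 1/18 + 4c + 4σc_ζ
        (∀ σ ∈ ({-1, 1} : Set ℝ),
          probOf n w (fun i => v i α = σ ∧ v i β = 0 ∧ v i γ = 0) =
            1 / 18 + 4 * c + 4 * σ * ca ∧
          probOf n w (fun i => v i β = σ ∧ v i α = 0 ∧ v i γ = 0) =
            1 / 18 + 4 * c + 4 * σ * cb ∧
          probOf n w (fun i => v i γ = σ ∧ v i α = 0 ∧ v i β = 0) =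
            1 / 18 + 4 * c + 4 * σ * cg) ∧
        -- P(two components = ±1, third = 0) = 1/36 − 2c − 2σc − 2σ'c'
        (∀ σ1 ∈ ({-1, 1} : Set ℝ), ∀ σ2 ∈ ({-1, 1} : Set ℝ),
          probOf n w (fun i => v i α = σ1 ∧ v i β = σ2 ∧ v i γ = 0) =
            1 / 36 - 2 * c - 2 * σ1 * ca - 2 * σ2 * cb ∧
          probOf n w (fun i => v i α = σ1 ∧ v i γ = σ2 ∧ v i β = 0) =
            1 / 36 - 2 * c - 2 * σ1 * ca - 2 * σ2 * cg ∧
          probOf n w (fun i => v i β = σ1 ∧ v i γ = σ2 ∧ v i α = 0) =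
            1 / 36 - 2 * c - 2 * σ1 * cb - 2 * σ2 * cg) ∧
        -- P(X_α = σ_α, X_β = σ_β, X_γ = σ_γ) = c + σ_α c_α + σ_β c_β + σ_γ c_γ
        (∀ σ1 ∈ ({-1, 1} : Set ℝ), ∀ σ2 ∈ ({-1, 1} : Set ℝ), ∀ σ3 ∈ ({-1, 1} : Set ℝ),
          probOf n w (fun i => v i α = σ1 ∧ v i β = σ2 ∧ v i γ = σ3) =
            c + σ1 * ca + σ2 * cb + σ3 * cg) ∧
        -- constraints on the constants
        |ca| + |cb| + |cg| ≤ c ∧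
        c + |ca| + |cb| ≤ 1 / 72 ∧ c + |ca| + |cg| ≤ 1 / 72 ∧ c + |cb| + |cg| ≤ 1 / 72 := by
  intro α β γ hab hag hbg
  have hcs : (√3)⁻¹ ^ 2 = (3⁻¹ : ℝ) := by simp
  have law := hlat.probOf_eq_jointMoment hcs hbdd hab hag hbg
  have hlow := hlat.abs_add_abs_add_abs_jointMoment_le hcs hbdd hab hag hbg
  obtain ⟨hαβ, hαγ, hβγ⟩ := hlat.jointMoment_add_abs_add_abs_le hcs hbdd hab hag hbg
  set M := jointMoment v w α β γ
  have abs_div_eight : ∀ x : ℝ, |x / 8| = |x| / 8 := fun x => by simp [abs_div]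
  have zero : (0 : ℝ) ∈ ({-1, 0, 1} : Set ℝ) := by simp
  refine ⟨M 2 2 2 / 8, ⟨?_, ?_⟩, M 1 2 2 / 8, abs_le.mp ?_, M 2 1 2 / 8, abs_le.mp ?_,
    M 2 2 1 / 8, abs_le.mp ?_, ?_, fun σ hσ => ⟨?_, ?_, ?_⟩, fun σ1 h1 σ2 h2 => ⟨?_, ?_, ?_⟩,
    fun σ1 h1 σ2 h2 σ3 h3 => ?_, ?_, ?_, ?_, ?_⟩
  -- postpone the five interval bounds to the final `linarith` together with the constraints
  rotate_left 5
  · rw [law 0 zero 0 zero 0 zero]; ring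
  · rw [law σ (signs_subset hσ) 0 zero 0 zero, sq_eq_one_of_mem_signs hσ]; ring
  · rw [probOf_and_left_comm, law 0 zero σ (signs_subset hσ) 0 zero, sq_eq_one_of_mem_signs hσ]
    ring
  · rw [probOf_and_rotate, law 0 zero 0 zero σ (signs_subset hσ), sq_eq_one_of_mem_signs hσ]
    ring
  · rw [law σ1 (signs_subset h1) σ2 (signs_subset h2) 0 zero, sq_eq_one_of_mem_signs h1,
      sq_eq_one_of_mem_signs h2]
    ring
  · rw [probOf_and_left_comm, probOf_and_rotate,
      law σ1 (signs_subset h1) 0 zero σ2 (signs_subset h2), sq_eq_one_of_mem_signs h1,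
      sq_eq_one_of_mem_signs h2]
    ring
  · rw [probOf_and_rotate, probOf_and_rotate,
      law 0 zero σ1 (signs_subset h1) σ2 (signs_subset h2), sq_eq_one_of_mem_signs h1,
      sq_eq_one_of_mem_signs h2]
    ring
  · rw [law σ1 (signs_subset h1) σ2 (signs_subset h2) σ3 (signs_subset h3),
      sq_eq_one_of_mem_signs h1, sq_eq_one_of_mem_signs h2, sq_eq_one_of_mem_signs h3]
    ring
  all_goals linarith [abs_div_eight (M 1 2 2), abs_div_eight (M 2 1 2), abs_div_eight (M 2 2 1),
    abs_nonneg (M 1 2 2), abs_nonneg (M 2 1 2), abs_nonneg (M 2 2 1)]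

theorem isotropic_lattice_triple_law (d n : ℕ) (hd : 3 ≤ d)
    (v : Fin (n + 1) → Spc d) (w : Fin (n + 1) → ℝ)
    (hlat : IsoLattice d n v w (Real.sqrt 3)⁻¹)
    (hbdd : ∀ i, ∀ α : Fin d, |v i α| ≤ 1) :
    ∀ α β γ : Fin d, α ≠ β → α ≠ γ → β ≠ γ →
      ∃ c ∈ Icc (0 : ℝ) (1 / 72), ∃ ca ∈ Icc (-(1 / 72) : ℝ) (1 / 72),
      ∃ cb ∈ Icc (-(1 / 72) : ℝ) (1 / 72), ∃ cg ∈ Icc (-(1 / 72) : ℝ) (1 / 72),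
        -- P(X_α = X_β = X_γ = 0) = 1/3 − 8c
        probOf n w (fun i => v i α = 0 ∧ v i β = 0 ∧ v i γ = 0) = 1 / 3 - 8 * c ∧
        -- P(X_ζ = σ, other two = 0) = 1/18 + 4c + 4σc_ζ
        (∀ σ ∈ ({-1, 1} : Set ℝ),
          probOf n w (fun i => v i α = σ ∧ v i β = 0 ∧ v i γ = 0) =
            1 / 18 + 4 * c + 4 * σ * ca ∧
          probOf n w (fun i => v i β = σ ∧ v i α = 0 ∧ v i γ = 0) =
            1 / 18 + 4 * c + 4 * σ * cb ∧
          probOf n w (fun i => v i γ = σ ∧ v i α = 0 ∧ v i β = 0) =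
            1 / 18 + 4 * c + 4 * σ * cg) ∧
        -- P(two components = ±1, third = 0) = 1/36 − 2c − 2σc − 2σ'c'
        (∀ σ1 ∈ ({-1, 1} : Set ℝ), ∀ σ2 ∈ ({-1, 1} : Set ℝ),
          probOf n w (fun i => v i α = σ1 ∧ v i β = σ2 ∧ v i γ = 0) =
            1 / 36 - 2 * c - 2 * σ1 * ca - 2 * σ2 * cb ∧
          probOf n w (fun i => v i α = σ1 ∧ v i γ = σ2 ∧ v i β = 0) =
            1 / 36 - 2 * c - 2 * σ1 * ca - 2 * σ2 * cg ∧
          probOf n w (fun i => v i β = σ1 ∧ v i γ = σ2 ∧ v i α = 0) =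
            1 / 36 - 2 * c - 2 * σ1 * cb - 2 * σ2 * cg) ∧
        -- P(X_α = σ_α, X_β = σ_β, X_γ = σ_γ) = c + σ_α c_α + σ_β c_β + σ_γ c_γ
        (∀ σ1 ∈ ({-1, 1} : Set ℝ), ∀ σ2 ∈ ({-1, 1} : Set ℝ), ∀ σ3 ∈ ({-1, 1} : Set ℝ),
          probOf n w (fun i => v i α = σ1 ∧ v i β = σ2 ∧ v i γ = σ3) =
            c + σ1 * ca + σ2 * cb + σ3 * cg) ∧
        -- constraints on the constants
        |ca| + |cb| + |cg| ≤ c ∧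
        c + |ca| + |cb| ≤ 1 / 72 ∧ c + |ca| + |cg| ≤ 1 / 72 ∧ c + |cb| + |cg| ≤ 1 / 72 :=
  isotropic_lattice_triple_law_general d n v w hlat hbdd

end
end
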